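/- For a graph G = (V,E), real t, real r > 1, real q, and k ∈ ℕ: B_{r,q}(G; t−1, k) = ∑_{σ: V → {0,...,k−1}} t^{b(σ)} · r^{∑_{v∈V} q^{σ(v)}}, where b(σ) = |{uv ∈ E : σ(u) = σ(v)}| is the number of monochromatic edges; equivalently, B_{r,q}(G;t−1,k) equals Stanley's bad-colouring polynomial XB(G; t−1, x_0, x_1, ...) evaluated at x_i = r^{q^i} for i < k and x_i = 0 for i ≥ k. -/

import Mathlib

open scoped Classical

/-- A (multi)graph with vertex set a finite set of naturals, edge labels a finite set of
naturals, each edge having an unordered pair of endpoints lying in the vertex set, and a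
vertex-weight function. -/
structure WGraph where
  verts : Finset ℕ
  edges : Finset ℕ
  ends : ℕ → Sym2 ℕ
  ends_mem : ∀ e ∈ edges, ∀ v ∈ ends e, v ∈ verts
  w : ℕ → ℕ

namespace WGraph

/-- Two vertices are joined in the spanning subgraph with edge set `A`. -/
def adj (G : WGraph) (A : Finset ℕ) (u v : ℕ) : Prop := ∃ i ∈ A, G.ends i = s(u, v)

/-- Reachability in the spanning subgraph with edge set `A`. -/
def reach (G : WGraph) (A : Finset ℕ) : ℕ → ℕ → Prop := Relation.ReflTransGen (G.adj A)

/-- The set of connected components of the spanning subgraph `(V, A)`. -/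
noncomputable def components (G : WGraph) (A : Finset ℕ) : Finset (Finset ℕ) :=
  G.verts.image (fun v => G.verts.filter (G.reach A v))

/-- The total weight of a set of vertices. -/
def wt (G : WGraph) (C : Finset ℕ) : ℕ := ∑ v ∈ C, G.w v

/-- All `k`-colourings: maps `V → {0, …, k-1}`, extended by `0` off the vertex set. -/
def allCol (G : WGraph) (k : ℕ) : Set (ℕ → ℕ) :=
  {s | (∀ v ∈ G.verts, s v < k) ∧ ∀ v ∉ G.verts, s v = 0}

/-- Proper `k`-colourings: no edge is monochromatic. -/
def properCol (G : WGraph) (k : ℕ) : Set (ℕ → ℕ) :=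
  {s ∈ G.allCol k | ∀ e ∈ G.edges, ∀ a b : ℕ, G.ends e = s(a, b) → s a ≠ s b}

/-- The weighted `(r,q)`-chromatic function
`M^ω_{r,q}(G;k) = ∑_{s ∈ col(G;k)} r^{∑_{v ∈ V} ω(v) q^{s(v)}}`. -/
noncomputable def Mw (G : WGraph) (r q : ℝ) (k : ℕ) : ℝ :=
  ∑ᶠ s ∈ G.properCol k, r ^ (∑ v ∈ G.verts, (G.w v : ℝ) * q ^ (s v))

/-- The unweighted `(r,q)`-chromatic function
`M_{r,q}(G;k) = ∑_{s ∈ col(G;k)} r^{∑_{v ∈ V} q^{s(v)}}`. -/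
noncomputable def M (G : WGraph) (r q : ℝ) (k : ℕ) : ℝ :=
  ∑ᶠ s ∈ G.properCol k, r ^ (∑ v ∈ G.verts, q ^ (s v))

/-- The weighted `(r,q)`-dichromatic function
`B^ω_{r,q}(G;x,k) = ∑_{A ⊆ E} x^{|A|} ∏_{C ∈ com(A)} ∑_{i=0}^{k-1} r^{ω(C) q^i}`. -/
noncomputable def Bw (G : WGraph) (r q x : ℝ) (k : ℕ) : ℝ :=
  ∑ A ∈ G.edges.powerset, x ^ A.card *
    ∏ C ∈ G.components A, ∑ i ∈ Finset.range k, r ^ ((G.wt C : ℝ) * q ^ i)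

/-- The unweighted `(r,q)`-dichromatic function
`B_{r,q}(G;x,k) = ∑_{A ⊆ E} x^{|A|} ∏_{C ∈ com(A)} ∑_{i=0}^{k-1} r^{|C| q^i}`. -/
noncomputable def B (G : WGraph) (r q x : ℝ) (k : ℕ) : ℝ :=
  ∑ A ∈ G.edges.powerset, x ^ A.card *
    ∏ C ∈ G.components A, ∑ i ∈ Finset.range k, r ^ ((C.card : ℝ) * q ^ i)

/-- Deletion of an edge. -/
def delete (G : WGraph) (e : ℕ) : WGraph where
  verts := G.verts
  edges := G.edges.erase e
  ends := G.ends
  ends_mem := fun i hi => G.ends_mem i (Finset.mem_of_mem_erase hi)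
  w := G.w

/-- Contraction of a non-loop edge `e` with ends `a`, `b`: the vertex `b` is merged into `a`,
whose new weight is `ω(a) + ω(b)`. -/
def contract (G : WGraph) (e a b : ℕ) : WGraph where
  verts := insert a (G.verts.erase b)
  edges := G.edges.erase e
  ends := fun i => (G.ends i).map (fun v => if v = b then a else v)
  ends_mem := by
    intro i hi v hv
    rcases Sym2.mem_map.1 hv with ⟨u, hu, rfl⟩
    by_cases h : u = b
    · simp [h]
    · simp only [if_neg h]
      exact Finset.mem_insert_of_mem
        (Finset.mem_erase.2 ⟨h, G.ends_mem i (Finset.mem_of_mem_erase hi) u hu⟩)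
  w := fun v => if v = a then G.w a + G.w b else G.w v

end WGraph

open WGraph

/-!
Expand `t ^ b(σ) = ∑_{A ⊆ mono(σ)} (t - 1) ^ |A|` and exchange the two sums. For fixed `A ⊆ E`,
the colourings monochromatic on every edge of `A` are exactly those constant on the components
of `(V, A)`, so their weights `∏_v x_{σ v}` add up to `∏_C ∑_{i < k} x_i ^ |C|`. Taking
`x_i = r ^ q ^ i` (which needs `r > 0` to split `r ^ ∑_v q ^ σ v` into a product) gives `B`.
-/

open Finset

namespace WGraph

variable (G : WGraph) {A : Finset ℕ}

lemma reach_symm {u v : ℕ} (h : G.reach A u v) : G.reach A v u := by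
  have : Std.Symm (G.adj A) := ⟨fun _ _ ⟨i, hi, he⟩ => ⟨i, hi, he.trans Sym2.eq_swap⟩⟩
  exact Std.Symm.symm (r := Relation.ReflTransGen (G.adj A)) _ _ h

noncomputable def componentOf (A : Finset ℕ) (v : ℕ) : Finset ℕ := G.verts.filter (G.reach A v)

variable {G}

lemma mem_componentOf {u v : ℕ} : u ∈ G.componentOf A v ↔ u ∈ G.verts ∧ G.reach A v u :=
  mem_filter

lemma mem_components {C : Finset ℕ} :
    C ∈ G.components A ↔ ∃ v ∈ G.verts, G.componentOf A v = C :=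
  mem_image

lemma self_mem_componentOf {v : ℕ} (hv : v ∈ G.verts) : v ∈ G.componentOf A v :=
  mem_componentOf.2 ⟨hv, .refl⟩

lemma componentOf_mem_components {v : ℕ} (hv : v ∈ G.verts) :
    G.componentOf A v ∈ G.components A :=
  mem_components.2 ⟨v, hv, rfl⟩

lemma componentOf_eq_of_mem {u v : ℕ} (h : u ∈ G.componentOf A v) :
    G.componentOf A u = G.componentOf A v := by
  obtain ⟨-, hvu⟩ := mem_componentOf.1 h
  ext w
  simp only [mem_componentOf, and_congr_right_iff]
  exact fun _ => ⟨hvu.trans, (G.reach_symm hvu).trans⟩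

lemma componentOf_eq_of_reach {u v : ℕ} (hv : v ∈ G.verts) (h : G.reach A u v) :
    G.componentOf A u = G.componentOf A v :=
  (componentOf_eq_of_mem (mem_componentOf.2 ⟨hv, h⟩)).symm

lemma componentOf_eq_of_mem_components {C : Finset ℕ} {v : ℕ} (hC : C ∈ G.components A)
    (hv : v ∈ C) : G.componentOf A v = C := by
  obtain ⟨u, -, rfl⟩ := mem_components.1 hC
  exact componentOf_eq_of_mem hv

lemma nonempty_of_mem_components {C : Finset ℕ} (hC : C ∈ G.components A) : C.Nonempty := by
  obtain ⟨v, hv, rfl⟩ := mem_components.1 hC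
  exact ⟨v, self_mem_componentOf hv⟩

lemma subset_verts_of_mem_components {C : Finset ℕ} (hC : C ∈ G.components A) :
    C ⊆ G.verts := by
  obtain ⟨v, -, rfl⟩ := mem_components.1 hC
  exact filter_subset _ _

lemma reach_of_mem_components {C : Finset ℕ} {u v : ℕ} (hC : C ∈ G.components A)
    (hu : u ∈ C) (hv : v ∈ C) : G.reach A u v := by
  rw [← componentOf_eq_of_mem_components hC hu] at hv
  exact (mem_componentOf.1 hv).2

lemma prod_verts_eq_prod_components {M : Type*} [CommMonoid M] (A : Finset ℕ) (f : ℕ → M) :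
    ∏ v ∈ G.verts, f v = ∏ C ∈ G.components A, ∏ v ∈ C, f v := by
  have hverts : G.verts = (G.components A).biUnion id := by
    ext v
    simp only [mem_biUnion, id]
    exact ⟨fun hv => ⟨_, componentOf_mem_components hv, self_mem_componentOf hv⟩,
      fun ⟨C, hC, hv⟩ => subset_verts_of_mem_components hC hv⟩
  have hdisj : (G.components A : Set (Finset ℕ)).PairwiseDisjoint id := by
    intro C hC D hD hCD
    refine disjoint_left.2 fun v hvC hvD => hCD ?_
    rw [← componentOf_eq_of_mem_components hC hvC, componentOf_eq_of_mem_components hD hvD]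
  rw [hverts, prod_biUnion hdisj]
  rfl

variable (G)

lemma allCol_finite (k : ℕ) : (G.allCol k).Finite := by
  refine Set.Finite.of_finite_image (f := fun σ (v : G.verts) => σ v) ?_ ?_
  · refine (Set.Finite.pi (t := fun _ => Set.Iio k) fun _ => Set.finite_Iio k).subset ?_
    rintro _ ⟨σ, hσ, rfl⟩ v -
    exact hσ.1 v v.2
  · intro σ hσ τ hτ hστ
    funext v
    by_cases hv : v ∈ G.verts
    · exact congrFun hστ ⟨v, hv⟩
    · rw [hσ.2 v hv, hτ.2 v hv]

noncomputable def colourings (k : ℕ) : Finset (ℕ → ℕ) := (G.allCol_finite k).toFinset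

def IsMonoOn (A : Finset ℕ) (σ : ℕ → ℕ) : Prop := ∀ i ∈ A, ((G.ends i).map σ).IsDiag

def monoEdges (σ : ℕ → ℕ) : Finset ℕ := G.edges.filter fun i => ((G.ends i).map σ).IsDiag

variable {G}

lemma mem_colourings {k : ℕ} {σ : ℕ → ℕ} :
    σ ∈ G.colourings k ↔ (∀ v ∈ G.verts, σ v < k) ∧ ∀ v ∉ G.verts, σ v = 0 :=
  Set.Finite.mem_toFinset _

lemma subset_monoEdges_iff {σ : ℕ → ℕ} :
    A ⊆ G.monoEdges σ ↔ A ⊆ G.edges ∧ G.IsMonoOn A σ := by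
  simp only [monoEdges, IsMonoOn, subset_iff, mem_filter]
  exact ⟨fun h => ⟨fun i hi => (h hi).1, fun i hi => (h hi).2⟩,
    fun h i hi => ⟨h.1 hi, h.2 i hi⟩⟩

lemma IsMonoOn.eq_of_reach {σ : ℕ → ℕ} {u v : ℕ} (hσ : G.IsMonoOn A σ) (h : G.reach A u v) :
    σ u = σ v := by
  induction h with
  | refl => rfl
  | tail _ hvw ih =>
    obtain ⟨i, hi, hends⟩ := hvw
    have hdiag := hσ i hi
    rw [hends, Sym2.map_mk, Sym2.mk_isDiag_iff] at hdiag
    exact ih.trans hdiag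

lemma isMonoOn_of_reach {σ : ℕ → ℕ} (hA : A ⊆ G.edges)
    (hσ : ∀ u ∈ G.verts, ∀ v ∈ G.verts, G.reach A u v → σ u = σ v) : G.IsMonoOn A σ := by
  intro i hi
  induction h : G.ends i using Sym2.ind with
  | h a b =>
    have hab : G.reach A a b := .single ⟨i, hi, h⟩
    have hverts := G.ends_mem i (hA hi)
    rw [h] at hverts
    rw [Sym2.map_mk, Sym2.mk_isDiag_iff]
    exact hσ a (hverts a (Sym2.mem_mk_left a b)) b (hverts b (Sym2.mem_mk_right a b)) hab


variable {R : Type*} [CommSemiring R]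

theorem sum_isMonoOn_colourings (hA : A ⊆ G.edges) (k : ℕ) (x : ℕ → R) :
    ∑ σ ∈ (G.colourings k).filter (G.IsMonoOn A), ∏ v ∈ G.verts, x (σ v) =
      ∏ C ∈ G.components A, ∑ i ∈ range k, x i ^ #C := by
  let rep (C : G.components A) : ℕ := (C : Finset ℕ).min' (nonempty_of_mem_components C.2)
  have rep_mem (C : G.components A) : rep C ∈ (C : Finset ℕ) := min'_mem _ _
  let extend (p : G.components A → ℕ) (v : ℕ) : ℕ :=
    if hv : v ∈ G.verts then p ⟨G.componentOf A v, componentOf_mem_components hv⟩ else 0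
  rw [← prod_coe_sort, prod_univ_sum]
  refine sum_nbij' (fun σ C => σ (rep C)) extend ?_ ?_ ?_ ?_ ?_
  · intro σ hσ
    have hcol := (mem_colourings.1 (mem_filter.1 hσ).1).1
    exact Fintype.mem_piFinset.2 fun C =>
      mem_range.2 (hcol _ (subset_verts_of_mem_components C.2 (rep_mem C)))
  · intro p hp
    refine mem_filter.2 ⟨mem_colourings.2 ⟨fun v hv => ?_, fun v hv => dif_neg hv⟩, ?_⟩
    · simpa [extend, hv] using Fintype.mem_piFinset.1 hp _
    · refine isMonoOn_of_reach hA fun u hu v hv huv => ?_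
      simp only [extend, dif_pos hu, dif_pos hv, componentOf_eq_of_reach hv huv]
  · intro σ hσ
    obtain ⟨hcol, hmono⟩ := mem_filter.1 hσ
    funext v
    by_cases hv : v ∈ G.verts
    · have hrep := mem_componentOf.1 (rep_mem ⟨_, componentOf_mem_components (A := A) hv⟩)
      simp only [extend, dif_pos hv]
      exact (hmono.eq_of_reach hrep.2).symm
    · simp only [extend, dif_neg hv, (mem_colourings.1 hcol).2 v hv]
  · intro p _
    funext C
    have hrep := subset_verts_of_mem_components C.2 (rep_mem C)
    simp only [extend, dif_pos hrep, componentOf_eq_of_mem_components C.2 (rep_mem C)]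
  · intro σ hσ
    rw [prod_verts_eq_prod_components A, ← prod_coe_sort]
    refine prod_congr rfl fun C _ => ?_
    rw [← prod_const]
    refine prod_congr rfl fun v hv => congrArg x ?_
    exact (mem_filter.1 hσ).2.eq_of_reach (reach_of_mem_components C.2 hv (rep_mem C))

theorem sum_colourings_pow_card_monoEdges {R : Type*} [CommRing R] (k : ℕ) (t : R)
    (x : ℕ → R) :
    ∑ σ ∈ G.colourings k, t ^ #(G.monoEdges σ) * ∏ v ∈ G.verts, x (σ v) =
      ∑ A ∈ G.edges.powerset, (t - 1) ^ #A * ∏ C ∈ G.components A, ∑ i ∈ range k, x i ^ #C := by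
  have pow_card_eq (s : Finset ℕ) : t ^ #s = ∑ A ∈ s.powerset, (t - 1) ^ #A := by
    simpa using (sum_pow_mul_eq_add_pow (t - 1) 1 s).symm
  calc _ = ∑ σ ∈ G.colourings k, ∑ A ∈ (G.monoEdges σ).powerset,
          (t - 1) ^ #A * ∏ v ∈ G.verts, x (σ v) := by simp_rw [pow_card_eq, sum_mul]
    _ = ∑ A ∈ G.edges.powerset, ∑ σ ∈ (G.colourings k).filter (G.IsMonoOn A),
          (t - 1) ^ #A * ∏ v ∈ G.verts, x (σ v) :=
      sum_comm' fun σ A => by simp only [mem_powerset, mem_filter, subset_monoEdges_iff]; tauto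
    _ = _ := sum_congr rfl fun A hA => by
      rw [← mul_sum, sum_isMonoOn_colourings (mem_powerset.1 hA)]

end WGraph

/-- For a graph `G`, real `t`, real `r > 1`, real `q` and `k ∈ ℕ`:
`B_{r,q}(G; t−1, k) = ∑_{σ : V → {0,…,k−1}} t^{b(σ)} · r^{∑_{v ∈ V} q^{σ(v)}}`, where
`b(σ)` is the number of monochromatic edges of `σ` (equivalently, `B_{r,q}(G;t−1,k)` is
Stanley's bad-colouring polynomial `XB(G; t−1, x_0, x_1, …)` evaluated at `x_i = r^{q^i}`
for `i < k` and `x_i = 0` for `i ≥ k`). -/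
theorem B_eq_badColouring (G : WGraph) (t r q : ℝ) (hr : 1 < r) (k : ℕ) :
    G.B r q (t - 1) k =
      ∑ᶠ σ ∈ G.allCol k,
        t ^ (G.edges.filter (fun i => ((G.ends i).map σ).IsDiag)).card *
          r ^ (∑ v ∈ G.verts, q ^ (σ v)) := by
  have hr0 : 0 < r := zero_lt_one.trans hr
  rw [finsum_mem_eq_finite_toFinset_sum _ (G.allCol_finite k)]
  simp_rw [Real.rpow_sum_of_pos hr0]
  change _ = ∑ σ ∈ G.colourings k, t ^ #(G.monoEdges σ) * ∏ v ∈ G.verts, r ^ q ^ σ v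
  rw [G.sum_colourings_pow_card_monoEdges k t fun i => r ^ q ^ i, B]
  simp_rw [mul_comm (#_ : ℝ), Real.rpow_mul_natCast hr0.le]
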